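/- There are no Gaussian integers x, y, z with xyz ≠ 0 satisfying x^4 - y^4 = z^2. -/

import Mathlib

/-!
Write `π = 1 + i` for the prime of `ℤ[i]` above `2`, so that `2 = -i π²`. The heart of the proof
is a descent on the equations `b⁴ + u π⁴ⁿ a⁴ = c²` (`u` a unit, `a`, `b` coprime and odd, i.e.
prime to `π`). In `(c - b²)(c + b²) = u π⁴ⁿ a⁴` the factors differ by `2b²`, so one of them is
divisible by exactly `π²` and the other by exactly `π⁴ⁿ⁻²`; their odd parts are coprime, hence
unit multiples of fourth powers `s⁴`, `t⁴`, and `π⁴ⁿ⁻² t⁴ - π² s⁴ = ±2b²` (up to units) is an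
equation of the same shape with `n - 1`. For `n = 1` it is ruled out by the congruence
`c² ≡ ±1 (mod π⁵)` for odd `c`. A primitive solution of `x⁴ - y⁴ = z²` gives an equation of this
family: directly when `π ∣ x` (or `π ∣ y`), and by the same splitting of
`(x² - y²)(x² + y²) = z²` when `x`, `y` are odd. Common prime factors of `x` and `y` are divided
out beforehand.
-/

section Valuation

variable {α : Type*} [CommMonoidWithZero α] [IsCancelMulZero α] {p e f : α} {j k m : ℕ}

theorem le_of_pow_dvd_pow_mul (hp : p ≠ 0) (he : ¬p ∣ e) (h : p ^ j ∣ p ^ k * e) : j ≤ k := by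
  by_contra! hkj
  obtain ⟨c, hc⟩ := (pow_dvd_pow p hkj).trans h
  exact he ⟨c, mul_left_cancel₀ (pow_ne_zero k hp) (by rw [hc, pow_succ, mul_assoc])⟩

theorem pow_mul_inj_of_not_dvd (hp : p ≠ 0) (he : ¬p ∣ e) (hf : ¬p ∣ f)
    (h : p ^ k * e = p ^ m * f) : k = m ∧ e = f := by
  obtain rfl : k = m := le_antisymm (le_of_pow_dvd_pow_mul hp hf (h ▸ dvd_mul_right _ _))
    (le_of_pow_dvd_pow_mul hp he (h ▸ dvd_mul_right _ _))
  exact ⟨rfl, mul_left_cancel₀ (pow_ne_zero k hp) h⟩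

end Valuation

theorem min_eq_of_pow_mul_sub_pow_mul {R : Type*} [CommRing R] [IsDomain R] {p e₁ e₂ r : R}
    {j k₁ k₂ : ℕ} (hp : p ≠ 0) (he₁ : ¬p ∣ e₁) (he₂ : ¬p ∣ e₂) (hr : ¬p ∣ r)
    (hk : 2 * j ≤ k₁ + k₂) (h : p ^ k₂ * e₂ - p ^ k₁ * e₁ = p ^ j * r) : min k₁ k₂ = j := by
  have hle : min k₁ k₂ ≤ j := le_of_pow_dvd_pow_mul hp hr <| h ▸ dvd_sub
    (dvd_mul_of_dvd_left (pow_dvd_pow p (min_le_right _ _)) _)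
    (dvd_mul_of_dvd_left (pow_dvd_pow p (min_le_left _ _)) _)
  refine le_antisymm hle (le_min ?_ ?_) <;> by_contra! hlt
  · have : p ^ (k₁ + 1) ∣ p ^ k₁ * e₁ := by
      rw [show p ^ k₁ * e₁ = p ^ k₂ * e₂ - p ^ j * r by rw [← h]; ring]
      exact dvd_sub (dvd_mul_of_dvd_left (pow_dvd_pow p (by omega)) _)
        (dvd_mul_of_dvd_left (pow_dvd_pow p hlt) _)
    exact absurd (le_of_pow_dvd_pow_mul hp he₁ this) (by omega)
  · have : p ^ (k₂ + 1) ∣ p ^ k₂ * e₂ := by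
      rw [show p ^ k₂ * e₂ = p ^ k₁ * e₁ + p ^ j * r by rw [← h]; ring]
      exact dvd_add (dvd_mul_of_dvd_left (pow_dvd_pow p (by omega)) _)
        (dvd_mul_of_dvd_left (pow_dvd_pow p hlt) _)
    exact absurd (le_of_pow_dvd_pow_mul hp he₂ this) (by omega)

namespace GaussianInt

local notation "π" => (⟨1, 1⟩ : GaussianInt)
local notation "I" => (⟨0, 1⟩ : GaussianInt)

theorem irreducible_pi : Irreducible π := by
  refine ⟨by rw [Zsqrtd.isUnit_iff_norm_isUnit]; decide, fun a b hab => ?_⟩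
  have h : a.norm * b.norm = 2 := by rw [← Zsqrtd.norm_mul, ← hab]; decide
  simpa only [Zsqrtd.isUnit_iff_norm_isUnit] using
    Int.prime_two.irreducible.isUnit_or_isUnit h.symm

theorem prime_pi : Prime π := irreducible_pi.prime

theorem pi_ne_zero : π ≠ 0 := prime_pi.ne_zero

theorem I_sq : I ^ 2 = -1 := by decide

theorem two_eq_pi_sq_mul : (2 : GaussianInt) = π ^ 2 * -I := by decide

theorem isUnit_I : IsUnit I := .of_mul_eq_one (-I) (by decide)

theorem isUnit_iff {u : GaussianInt} : IsUnit u ↔ u = 1 ∨ u = -1 ∨ u = I ∨ u = -I := by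
  refine ⟨fun hu => ?_, by rintro (rfl | rfl | rfl | rfl) <;> simp [isUnit_I]⟩
  have h : u.re * u.re + u.im * u.im = 1 := by
    simpa [Zsqrtd.norm_def] using (Zsqrtd.norm_eq_one_iff' (by norm_num) u).2 hu
  obtain ⟨re, im⟩ := u
  have : -1 ≤ re := by nlinarith
  have : re ≤ 1 := by nlinarith
  have : -1 ≤ im := by nlinarith
  have : im ≤ 1 := by nlinarith
  interval_cases re <;> interval_cases im <;> simp_all <;> decide

theorem not_pi_dvd_of_isUnit {u : GaussianInt} (hu : IsUnit u) : ¬π ∣ u := fun h =>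
  prime_pi.not_isUnit (isUnit_of_dvd_unit h hu)

theorem not_pi_dvd_mul {a b : GaussianInt} (ha : ¬π ∣ a) (hb : ¬π ∣ b) : ¬π ∣ a * b := fun h =>
  (prime_pi.dvd_or_dvd h).elim ha hb

theorem not_pi_dvd_pow {a : GaussianInt} (ha : ¬π ∣ a) (n : ℕ) : ¬π ∣ a ^ n := fun h =>
  ha (prime_pi.dvd_of_dvd_pow h)

theorem pi_dvd_iff {z : GaussianInt} : π ∣ z ↔ 2 ∣ z.re + z.im := by
  constructor
  · rintro ⟨w, rfl⟩
    exact ⟨w.re, by simp [Zsqrtd.re_mul, Zsqrtd.im_mul]; ring⟩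
  · rintro ⟨k, hk⟩
    refine ⟨⟨k, z.im - k⟩, ?_⟩
    ext <;> simp [Zsqrtd.re_mul, Zsqrtd.im_mul]
    omega

theorem pi_pow_five_dvd_iff {z : GaussianInt} :
    π ^ 5 ∣ z ↔ 8 ∣ z.re + z.im ∧ 8 ∣ z.re - z.im := by
  rw [show π ^ 5 = ⟨-4, -4⟩ by decide]
  constructor
  · rintro ⟨w, rfl⟩
    exact ⟨⟨-w.re, by simp [Zsqrtd.re_mul, Zsqrtd.im_mul]; ring⟩,
      ⟨w.im, by simp [Zsqrtd.re_mul, Zsqrtd.im_mul]; ring⟩⟩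
  · rintro ⟨⟨k, hk⟩, ⟨l, hl⟩⟩
    exact ⟨⟨-k, l⟩, by ext <;> simp [Zsqrtd.re_mul, Zsqrtd.im_mul] <;> omega⟩

theorem pi_pow_five_dvd_sq_sub_one_or_sq_add_one {z : GaussianInt} (hz : ¬π ∣ z) :
    π ^ 5 ∣ z ^ 2 - 1 ∨ π ^ 5 ∣ z ^ 2 + 1 := by
  -- `4 * (a + b) ≠ 0` in `ZMod 8` says that `a + b` is odd.
  have key : ∀ a b : ZMod 8, 4 * (a + b) ≠ 0 →
      (a ^ 2 - b ^ 2 - 1 + 2 * a * b = 0 ∧ a ^ 2 - b ^ 2 - 1 - 2 * a * b = 0) ∨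
      (a ^ 2 - b ^ 2 + 1 + 2 * a * b = 0 ∧ a ^ 2 - b ^ 2 + 1 - 2 * a * b = 0) := by
    decide
  have h8 (X : ℤ) : 8 ∣ X ↔ (X : ZMod 8) = 0 := by
    rw [ZMod.intCast_zmod_eq_zero_iff_dvd]; rfl
  have hodd : ¬8 ∣ 4 * (z.re + z.im) := by rw [pi_dvd_iff] at hz; omega
  simp only [pi_pow_five_dvd_iff, sq, Zsqrtd.re_sub, Zsqrtd.im_sub, Zsqrtd.re_add, Zsqrtd.im_add,
    Zsqrtd.re_mul, Zsqrtd.im_mul, Zsqrtd.re_one, Zsqrtd.im_one, h8] at hodd ⊢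
  push_cast at hodd ⊢
  convert key z.re z.im hodd using 3 <;> ring

theorem pi_pow_five_dvd_pow_four_sub_one {z : GaussianInt} (hz : ¬π ∣ z) : π ^ 5 ∣ z ^ 4 - 1 := by
  rw [show z ^ 4 - 1 = (z ^ 2 - 1) * (z ^ 2 + 1) by ring]
  rcases pi_pow_five_dvd_sq_sub_one_or_sq_add_one hz with h | h
  exacts [dvd_mul_of_dvd_left h _, dvd_mul_of_dvd_right h _]

theorem eq_one_of_isUnit_of_pi_pow_three_dvd {ω : GaussianInt} (hω : IsUnit ω)
    (h : π ^ 3 ∣ ω - 1) : ω = 1 := by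
  -- `π³` has norm `8`, while `ω - 1` has norm `4` or `2` for `ω = -1, ±I`.
  have hN := map_dvd Zsqrtd.normMonoidHom h
  rcases isUnit_iff.1 hω with rfl | rfl | rfl | rfl
  · rfl
  all_goals revert hN; decide

theorem eq_one_or_eq_neg_one_of_pi_pow_three_dvd {v r : GaussianInt} (hv : IsUnit v)
    (hr : ¬π ∣ r) (h : π ^ 3 ∣ v * r ^ 2 - 1) : v = 1 ∨ v = -1 := by
  have h35 : π ^ 3 ∣ π ^ 5 := pow_dvd_pow _ (by norm_num)
  rcases pi_pow_five_dvd_sq_sub_one_or_sq_add_one hr with hr2 | hr2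
  · refine .inl (eq_one_of_isUnit_of_pi_pow_three_dvd hv ?_)
    rw [show v - 1 = (v * r ^ 2 - 1) - v * (r ^ 2 - 1) by ring]
    exact dvd_sub h ((h35.trans hr2).mul_left v)
  · refine .inr (neg_eq_iff_eq_neg.1 (eq_one_of_isUnit_of_pi_pow_three_dvd hv.neg ?_))
    rw [show -v - 1 = (v * r ^ 2 - 1) - v * (r ^ 2 + 1) by ring]
    exact dvd_sub h ((h35.trans hr2).mul_left v)

theorem dvd_of_dvd_two_mul {r x : GaussianInt} (hr : Prime r) (hπr : ¬π ∣ r)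
    (h : r ∣ 2 * x) : r ∣ x := by
  rw [two_eq_pi_sq_mul, mul_assoc] at h
  rcases hr.dvd_or_dvd h with h | h
  · exact absurd (hr.irreducible.dvd_symm irreducible_pi (hr.dvd_of_dvd_pow h)) hπr
  · rcases hr.dvd_or_dvd h with h | h
    · exact absurd (isUnit_of_dvd_unit h isUnit_I.neg) hr.not_isUnit
    · exact h

theorem isCoprime_of_add_of_sub_eq_two_mul {a b d₁ d₂ p q : GaussianInt} (ha : ¬π ∣ a)
    (hpq : IsCoprime p q) (had : a ∣ d₁) (hbd : b ∣ d₂) (hadd : d₁ + d₂ = 2 * p)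
    (hsub : d₂ - d₁ = 2 * q) : IsCoprime a b := by
  refine isCoprime_of_prime_dvd (fun h => ha (h.1 ▸ dvd_zero _)) fun r hr hra hrb => ?_
  have hπr : ¬π ∣ r := fun h => ha (h.trans hra)
  have h₁ := hra.trans had
  have h₂ := hrb.trans hbd
  exact hr.not_isUnit (hpq.isUnit_of_dvd' (dvd_of_dvd_two_mul hr hπr (hadd ▸ dvd_add h₁ h₂))
    (dvd_of_dvd_two_mul hr hπr (hsub ▸ dvd_sub h₂ h₁)))

theorem exists_eq_pow_mul_of_add_of_sub {d₁ d₂ p q u g : GaussianInt} {k m : ℕ} (hk : k ≠ 0)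
    (hm : 4 ≤ m) (hq : ¬π ∣ q) (hpq : IsCoprime p q) (hadd : d₁ + d₂ = 2 * p)
    (hsub : d₂ - d₁ = 2 * q) (hu : IsUnit u) (hg : ¬π ∣ g)
    (hprod : d₁ * d₂ = u * π ^ m * g ^ k) :
    ∃ s t w₁ w₂ : GaussianInt, IsUnit w₁ ∧ IsUnit w₂ ∧ ¬π ∣ s ∧ ¬π ∣ t ∧ IsCoprime s t ∧
      (d₁ = π ^ 2 * (w₁ * s ^ k) ∧ d₂ = π ^ (m - 2) * (w₂ * t ^ k) ∨
        d₁ = π ^ (m - 2) * (w₁ * s ^ k) ∧ d₂ = π ^ 2 * (w₂ * t ^ k)) := by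
  have hprod0 : d₁ * d₂ ≠ 0 := by
    rw [hprod]
    exact mul_ne_zero (mul_ne_zero hu.ne_zero (pow_ne_zero _ pi_ne_zero))
      (pow_ne_zero _ fun h => hg (h ▸ dvd_zero _))
  obtain ⟨k₁, e₁, he₁, rfl⟩ :=
    WfDvdMonoid.max_power_factor (left_ne_zero_of_mul hprod0) irreducible_pi
  obtain ⟨k₂, e₂, he₂, rfl⟩ :=
    WfDvdMonoid.max_power_factor (right_ne_zero_of_mul hprod0) irreducible_pi
  obtain ⟨hk₁₂, he⟩ : k₁ + k₂ = m ∧ e₁ * e₂ = u * g ^ k := by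
    refine pow_mul_inj_of_not_dvd pi_ne_zero (not_pi_dvd_mul he₁ he₂)
      (not_pi_dvd_mul (not_pi_dvd_of_isUnit hu) (not_pi_dvd_pow hg k)) ?_
    rw [pow_add]; linear_combination hprod
  have hmin : min k₁ k₂ = 2 := by
    refine min_eq_of_pow_mul_sub_pow_mul pi_ne_zero he₁ he₂ (r := -I * q)
      (not_pi_dvd_mul (not_pi_dvd_of_isUnit isUnit_I.neg) hq) (by omega) ?_
    rw [hsub, two_eq_pi_sq_mul]; ring
  have hcop : IsCoprime e₁ e₂ := isCoprime_of_add_of_sub_eq_two_mul he₁ hpq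
    (dvd_mul_left _ _) (dvd_mul_left _ _) hadd hsub
  have hassoc : Associated (g ^ k) (e₁ * e₂) := he ▸ (associated_unit_mul_left _ u hu).symm
  obtain ⟨s, w₁, hs⟩ := exists_associated_pow_of_associated_pow_mul hcop hassoc
  obtain ⟨t, w₂, ht⟩ := exists_associated_pow_of_associated_pow_mul hcop.symm
    (mul_comm e₁ e₂ ▸ hassoc)
  refine ⟨s, t, w₁, w₂, w₁.isUnit, w₂.isUnit, fun h => he₁ ?_, fun h => he₂ ?_,
    (hcop.of_isCoprime_of_dvd_left ?_).of_isCoprime_of_dvd_right ?_, ?_⟩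
  · exact hs ▸ (dvd_pow h hk).mul_right _
  · exact ht ▸ (dvd_pow h hk).mul_right _
  · exact hs ▸ (dvd_pow_self s hk).mul_right _
  · exact ht ▸ (dvd_pow_self t hk).mul_right _
  · rw [← hs, ← ht]
    rcases (by omega : k₁ = 2 ∧ k₂ = m - 2 ∨ k₁ = m - 2 ∧ k₂ = 2) with ⟨rfl, rfl⟩ | ⟨rfl, rfl⟩
    exacts [.inl ⟨by ring, by ring⟩, .inr ⟨by ring, by ring⟩]

def HasOddSolution (n : ℕ) : Prop :=
  ∃ a b c u : GaussianInt, IsUnit u ∧ ¬π ∣ a ∧ ¬π ∣ b ∧ IsCoprime a b ∧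
    b ^ 4 + u * π ^ (4 * n) * a ^ 4 = c ^ 2

theorem hasOddSolution_of_sub_eq {n j : ℕ} {r s t U V W : GaussianInt} (hn : n ≠ 0)
    (hU : IsUnit U) (hV : IsUnit V) (hW : IsUnit W) (hr : ¬π ∣ r) (hs : ¬π ∣ s) (ht : ¬π ∣ t)
    (hst : IsCoprime s t)
    (h : π ^ (4 * n + j) * (W * t ^ 4) - π ^ j * (V * s ^ 4) = π ^ j * (U * r ^ 2)) :
    HasOddSolution n := by
  obtain ⟨V, rfl⟩ := hV
  -- `s⁴ ≡ 1 (mod π³)` forces the unit in front of `r²` to be `±1`, and `-1 = I²`.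
  have h' : π ^ (4 * n) * (W * t ^ 4) - V * s ^ 4 = U * r ^ 2 := by
    refine mul_left_cancel₀ (pow_ne_zero j pi_ne_zero) ?_
    rw [← h, pow_add]; ring
  have heq : s ^ 4 + -(↑V⁻¹ * W) * π ^ (4 * n) * t ^ 4 = -(↑V⁻¹ * U) * r ^ 2 := by
    linear_combination (-(↑V⁻¹ : GaussianInt)) * h' - s ^ 4 * V.inv_mul
  have hv : π ^ 3 ∣ -(↑V⁻¹ * U) * r ^ 2 - 1 := by
    rw [← heq, show ∀ x, s ^ 4 + x - 1 = (s ^ 4 - 1) + x from fun x => by ring]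
    refine dvd_add ((pow_dvd_pow π (by norm_num)).trans (pi_pow_five_dvd_pow_four_sub_one hs)) ?_
    exact ((pow_dvd_pow π (by omega)).mul_left _).mul_right _
  have hu : IsUnit (-(↑V⁻¹ * W)) := (V⁻¹.isUnit.mul hW).neg
  rcases eq_one_or_eq_neg_one_of_pi_pow_three_dvd (V⁻¹.isUnit.mul hU).neg hr hv with h1 | h1
  · exact ⟨t, s, r, _, hu, ht, hs, hst.symm, by rw [heq, h1, one_mul]⟩
  · exact ⟨t, s, I * r, _, hu, ht, hs, hst.symm,
      by linear_combination heq + r ^ 2 * h1 - r ^ 2 * I_sq⟩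

theorem not_hasOddSolution_one : ¬HasOddSolution 1 := by
  rintro ⟨a, b, c, u, hu, ha, hb, -, heq⟩
  -- `c² ≡ 1 + uπ⁴ (mod π⁵)`, which is neither `1` nor `-1 = 1 - 2` modulo `π⁵`.
  have hc : ¬π ∣ c := fun h => hb <| prime_pi.dvd_of_dvd_pow (n := 4) <| by
    rw [show b ^ 4 = c ^ 2 - π * (u * π ^ 3 * a ^ 4) by linear_combination heq]
    exact dvd_sub (dvd_pow h two_ne_zero) (dvd_mul_right _ _)
  have h5 : π ^ 5 ∣ c ^ 2 - 1 - π ^ 4 * u := by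
    rw [show c ^ 2 - 1 - π ^ 4 * u = (b ^ 4 - 1) + π ^ 4 * (u * (a ^ 4 - 1)) by
      linear_combination -heq]
    refine dvd_add (pi_pow_five_dvd_pow_four_sub_one hb) ?_
    rw [pow_succ]
    exact mul_dvd_mul_left _ (((dvd_pow_self π (by norm_num)).trans
      (pi_pow_five_dvd_pow_four_sub_one ha)).mul_left u)
  rcases pi_pow_five_dvd_sq_sub_one_or_sq_add_one hc with h | h
  · have : π ^ 5 ∣ π ^ 4 * -u := by
      rw [show π ^ 4 * -u = (c ^ 2 - 1 - π ^ 4 * u) - (c ^ 2 - 1) by ring]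
      exact dvd_sub h5 h
    exact absurd (le_of_pow_dvd_pow_mul pi_ne_zero (not_pi_dvd_of_isUnit hu.neg) this) (by norm_num)
  · have hodd : ¬π ∣ -I + π ^ 2 * u := fun h' => not_pi_dvd_of_isUnit isUnit_I.neg <| by
      rw [show -I = (-I + π ^ 2 * u) - π * (π * u) by ring]
      exact dvd_sub h' (dvd_mul_right _ _)
    have : π ^ 5 ∣ π ^ 2 * (-I + π ^ 2 * u) := by
      rw [show π ^ 2 * (-I + π ^ 2 * u) = (c ^ 2 + 1) - (c ^ 2 - 1 - π ^ 4 * u) by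
        rw [show c ^ 2 + 1 = c ^ 2 - 1 + 2 by ring, two_eq_pi_sq_mul]; ring]
      exact dvd_sub h h5
    exact absurd (le_of_pow_dvd_pow_mul pi_ne_zero hodd this) (by norm_num)

theorem HasOddSolution.descend {n : ℕ} (h : HasOddSolution (n + 2)) : HasOddSolution (n + 1) := by
  obtain ⟨a, b, c, u, hu, ha, hb, hab, heq⟩ := h
  have hcb : IsCoprime c b := by
    refine isCoprime_of_prime_dvd (fun h => hb (h.2 ▸ dvd_zero _)) fun r hr hrc hrb => ?_
    have : r ∣ u * π ^ (4 * (n + 2)) * a ^ 4 := by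
      rw [show u * π ^ (4 * (n + 2)) * a ^ 4 = c ^ 2 - b ^ 4 by linear_combination heq]
      exact dvd_sub (dvd_pow hrc two_ne_zero) (dvd_pow hrb four_ne_zero)
    rcases hr.dvd_or_dvd this with h | h
    · rcases hr.dvd_or_dvd h with h | h
      · exact hr.not_isUnit (isUnit_of_dvd_unit h hu)
      · exact hb ((hr.irreducible.dvd_symm irreducible_pi (hr.dvd_of_dvd_pow h)).trans hrb)
    · exact hr.not_isUnit (hab.isUnit_of_dvd' (hr.dvd_of_dvd_pow h) hrb)
  obtain ⟨s, t, w₁, w₂, hw₁, hw₂, hs, ht, hst, hd⟩ :=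
    exists_eq_pow_mul_of_add_of_sub (d₁ := c - b ^ 2) (d₂ := c + b ^ 2) (m := 4 * (n + 2))
      four_ne_zero (by omega) (not_pi_dvd_pow hb 2) hcb.pow_right (by ring) (by ring) hu ha
      (by linear_combination -heq)
  rw [show 4 * (n + 2) - 2 = 4 * (n + 1) + 2 by omega] at hd
  rcases hd with ⟨h₁, h₂⟩ | ⟨h₁, h₂⟩
  · refine hasOddSolution_of_sub_eq (j := 2) n.succ_ne_zero isUnit_I.neg hw₁ hw₂ hb hs ht hst ?_
    rw [← h₁, ← h₂]
    linear_combination b ^ 2 * two_eq_pi_sq_mul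
  · refine hasOddSolution_of_sub_eq (j := 2) n.succ_ne_zero isUnit_I hw₂ hw₁ hb ht hs hst.symm ?_
    rw [← h₁, ← h₂]
    linear_combination -b ^ 2 * two_eq_pi_sq_mul

theorem not_hasOddSolution {n : ℕ} (hn : n ≠ 0) : ¬HasOddSolution n := by
  induction n with
  | zero => exact absurd rfl hn
  | succ n ih =>
    rcases n with _ | n
    · exact not_hasOddSolution_one
    · exact fun h => ih n.succ_ne_zero h.descend

theorem pow_four_sub_pow_four_ne_sq_of_pi_dvd {x y z : GaussianInt} (hx : x ≠ 0)
    (hxy : IsCoprime x y) (hπx : π ∣ x) : x ^ 4 - y ^ 4 ≠ z ^ 2 := by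
  intro heq
  obtain ⟨k, x₀, hx₀, rfl⟩ := WfDvdMonoid.max_power_factor hx irreducible_pi
  have hk : k ≠ 0 := by
    rintro rfl
    exact hx₀ (by simpa using hπx)
  have hy : ¬π ∣ y := fun h => prime_pi.not_isUnit (hxy.isUnit_of_dvd' hπx h)
  refine not_hasOddSolution hk ⟨x₀, y, I * z, -1, isUnit_one.neg, hx₀, hy,
    hxy.of_isCoprime_of_dvd_left (dvd_mul_left _ _), ?_⟩
  linear_combination -heq - z ^ 2 * I_sq

theorem pow_four_sub_pow_four_ne_sq_of_not_pi_dvd {x y z : GaussianInt} (hx : ¬π ∣ x)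
    (hy : ¬π ∣ y) (hxy : IsCoprime x y) (hz : z ≠ 0) : x ^ 4 - y ^ 4 ≠ z ^ 2 := by
  intro heq
  obtain ⟨M, z₀, hz₀, rfl⟩ := WfDvdMonoid.max_power_factor hz irreducible_pi
  have hM : 5 ≤ 2 * M := by
    refine le_of_pow_dvd_pow_mul pi_ne_zero (not_pi_dvd_pow hz₀ 2) ?_
    rw [show π ^ (2 * M) * z₀ ^ 2 = (x ^ 4 - 1) - (y ^ 4 - 1) by
      rw [sub_sub_sub_cancel_right, heq]; ring]
    exact dvd_sub (pi_pow_five_dvd_pow_four_sub_one hx) (pi_pow_five_dvd_pow_four_sub_one hy)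
  obtain ⟨s, t, w₁, w₂, hw₁, hw₂, hs, ht, hst, hd⟩ :=
    exists_eq_pow_mul_of_add_of_sub (d₁ := x ^ 2 - y ^ 2) (d₂ := x ^ 2 + y ^ 2) (u := 1)
      (m := 2 * M) two_ne_zero (by omega) (not_pi_dvd_pow hy 2) (hxy.pow (m := 2) (n := 2))
      (by ring) (by ring) isUnit_one hz₀ (by linear_combination heq)
  rw [show 2 * M - 2 = 2 * (M - 2) + 2 by omega] at hd
  have hM2 : M - 2 ≠ 0 := by omega
  have hπ4 : π ^ 4 = -4 := by decide
  refine not_hasOddSolution hM2 ?_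
  rcases hd with ⟨h₁, h₂⟩ | ⟨h₁, h₂⟩
  · refine hasOddSolution_of_sub_eq (j := 4) hM2 isUnit_one.neg (hw₁.pow 2) (hw₂.pow 2)
      (not_pi_dvd_mul hx hy) hs ht hst ?_
    linear_combination (-(x ^ 2 + y ^ 2) - π ^ (2 * (M - 2) + 2) * (w₂ * t ^ 2)) * h₂
      + (x ^ 2 - y ^ 2 + π ^ 2 * (w₁ * s ^ 2)) * h₁ + (x * y) ^ 2 * hπ4
  · refine hasOddSolution_of_sub_eq (j := 4) hM2 isUnit_one (hw₂.pow 2) (hw₁.pow 2)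
      (not_pi_dvd_mul hx hy) ht hs hst.symm ?_
    linear_combination (-(x ^ 2 - y ^ 2) - π ^ (2 * (M - 2) + 2) * (w₁ * s ^ 2)) * h₁
      + (x ^ 2 + y ^ 2 + π ^ 2 * (w₂ * t ^ 2)) * h₂ - (x * y) ^ 2 * hπ4

theorem pow_four_sub_pow_four_ne_sq_of_isCoprime {x y z : GaussianInt} (hx : x ≠ 0) (hy : y ≠ 0)
    (hz : z ≠ 0) (hxy : IsCoprime x y) : x ^ 4 - y ^ 4 ≠ z ^ 2 := by
  by_cases hπx : π ∣ x
  · exact pow_four_sub_pow_four_ne_sq_of_pi_dvd hx hxy hπx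
  by_cases hπy : π ∣ y
  · intro heq
    exact pow_four_sub_pow_four_ne_sq_of_pi_dvd (z := I * z) hy hxy.symm hπy
      (by linear_combination -heq - z ^ 2 * I_sq)
  · exact pow_four_sub_pow_four_ne_sq_of_not_pi_dvd hπx hπy hxy hz

theorem pow_four_sub_pow_four_ne_sq {x y z : GaussianInt} (hx : x ≠ 0) (hy : y ≠ 0)
    (hz : z ≠ 0) : x ^ 4 - y ^ 4 ≠ z ^ 2 := by
  induction x using (wellFounded_dvdNotUnit (α := GaussianInt)).induction generalizing y z with
  | _ x ih =>
  intro heq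
  by_cases hxy : IsCoprime x y
  · exact pow_four_sub_pow_four_ne_sq_of_isCoprime hx hy hz hxy heq
  obtain ⟨r, hr, ⟨x', rfl⟩, ⟨y', rfl⟩⟩ : ∃ r, Prime r ∧ r ∣ x ∧ r ∣ y := by
    by_contra! h
    exact hxy (isCoprime_of_prime_dvd (fun h' => hx h'.1) h)
  obtain ⟨z', rfl⟩ : r ^ 2 ∣ z := (UniqueFactorizationMonoid.pow_dvd_pow_iff_dvd two_ne_zero).1
    ⟨x' ^ 4 - y' ^ 4, by rw [← heq]; ring⟩
  refine ih x' ⟨right_ne_zero_of_mul hx, r, hr.not_isUnit, mul_comm _ _⟩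
    (right_ne_zero_of_mul hx) (right_ne_zero_of_mul hy) (right_ne_zero_of_mul hz) ?_
  exact mul_left_cancel₀ (pow_ne_zero 4 hr.ne_zero) (by linear_combination heq)

end GaussianInt

/-- Hilbert's result: the equation `x⁴ - y⁴ = z²` has only trivial solutions
in the Gaussian integers `ℤ[i]`. -/
theorem stmt_3 :
    ¬ ∃ x y z : GaussianInt, x * y * z ≠ 0 ∧ x ^ 4 - y ^ 4 = z ^ 2 := by
  rintro ⟨x, y, z, hxyz, heq⟩
  simp only [ne_eq, mul_eq_zero, not_or] at hxyz
  exact GaussianInt.pow_four_sub_pow_four_ne_sq hxyz.1.1 hxyz.1.2 hxyz.2 heq
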